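/- arXiv:2006.11922 — 2 statements merged into one kernel-verified Lean document; each statement's English description precedes it below -/
import Mathlib

section
/- For all w ∈ ℍ, all m ∈ ℤ and all integers s ≥ 0 one has the exact identity S₁(w + m·2^s) = S₁(w) + Δ_{m,s}(w) + c_m, where Δ_{m,s}(w) = ∑_{l=1}^∞ (e(w/2^{l+s}) − 1)(e(m/2^l) − 1). Moreover, for every compact K ⊂ ℍ and every m ∈ ℤ there is a constant C such that |Δ_{m,s}(w)| ≤ C·2^{−s} for all w ∈ K and all s ≥ 0. -/
/-- `e(w) = exp(2πiw)`. -/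
noncomputable def e (w : ℂ) : ℂ := Complex.exp (2 * Real.pi * Complex.I * w)

/-- The Fredholm series `f(z) = ∑_{n=0}^∞ z^{2^n}`. -/
noncomputable def f (z : ℂ) : ℂ := ∑' n : ℕ, z ^ (2 ^ n)

/-- `F(w) = f(e(w)) = ∑_{n=0}^∞ e(2^n w)` on the upper half-plane. -/
noncomputable def F (w : ℂ) : ℂ := ∑' n : ℕ, e ((2 ^ n : ℕ) * w)

/-- `G(w) = ∑_{l=1}^∞ e(−1/2^l)(e(w/2^l) − 1)` (indexing: `l = l' + 1`, `l' : ℕ`). -/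
noncomputable def G (w : ℂ) : ℂ :=
  ∑' l : ℕ, e (-(1 / 2 ^ (l + 1))) * (e (w / 2 ^ (l + 1)) - 1)

/-- `S = F + G` on the upper half-plane. -/
noncomputable def S (w : ℂ) : ℂ := F w + G w

/-- The upper half-plane `ℍ = {w : ℂ | Im w > 0}`. -/
def UHP : Set ℂ := {w : ℂ | 0 < w.im}

/-- `V = S(ℍ)`, the image of `S` on the upper half-plane. -/
noncomputable def V : Set ℂ := S '' UHP

/-- `S₁(w) = S(w+1)`. -/
noncomputable def S₁ (w : ℂ) : ℂ := S (w + 1)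

/-- `c_m = ∑_{l=1}^∞ (e(m/2^l) − 1)` (indexing: `l = l' + 1`, `l' : ℕ`). -/
noncomputable def c (m : ℤ) : ℂ := ∑' l : ℕ, (e ((m : ℂ) / 2 ^ (l + 1)) - 1)

/-- `Δ_{m,s}(w) = ∑_{l=1}^∞ (e(w/2^{l+s}) − 1)(e(m/2^l) − 1)`. -/
noncomputable def Δ (m : ℤ) (s : ℕ) (w : ℂ) : ℂ :=
  ∑' l : ℕ, (e (w / 2 ^ (l + 1 + s)) - 1) * (e ((m : ℂ) / 2 ^ (l + 1)) - 1)


/-! Since `F` has period `1`, the whole translation behaviour of `S₁` sits in `G`. With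
`g(a) = ∑_{l ≥ 1} (e(a/2^l) − 1)` (`dyadicSum`) one has `G(v + 1) = g(v) − g(−1)` and
`c_m = g(m)`. In `g(w + m·2^s) − g(w) = ∑_{l ≥ 1} e(w/2^l)(e(m·2^s/2^l) − 1)` the terms with
`l ≤ s` vanish, and for `l = j + s` one has
`e(w/2^{j+s})(e(m/2^j) − 1) = (e(w/2^{j+s}) − 1)(e(m/2^j) − 1) + (e(m/2^j) − 1)`,
which sums to `Δ_{m,s}(w) + c_m`. The bound on `Δ_{m,s}` comes from `|e(a/2^k) − 1| ≤ C_K 2^{−k}`,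
uniform for `a` in a bounded set `K`. -/

open Real Bornology

noncomputable def dyadicSum (a : ℂ) : ℂ := ∑' l : ℕ, (e (a / 2 ^ (l + 1)) - 1)

lemma e_add (a b : ℂ) : e (a + b) = e a * e b := by
  simp only [e, ← Complex.exp_add]
  ring_nf

lemma e_add_intCast (z : ℂ) (k : ℤ) : e (z + k) = e z := by
  unfold e
  rw [mul_add, Complex.exp_add, mul_comm _ (k : ℂ), Complex.exp_int_mul_two_pi_mul_I, mul_one]

lemma norm_e_sub_one_le (z : ℂ) : ‖e z - 1‖ ≤ 2 * π * ‖z‖ * rexp (2 * π * ‖z‖) := by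
  have hz : ‖2 * π * Complex.I * z‖ = 2 * π * ‖z‖ := by
    simp [Complex.norm_real, abs_of_pos pi_pos]
  have h := Complex.norm_exp_sub_sum_le_norm_mul_exp (2 * π * Complex.I * z) 1
  rwa [Finset.sum_range_one, pow_zero, Nat.factorial_zero, Nat.cast_one, div_one, pow_one, hz] at h

lemma Bornology.IsBounded.exists_norm_e_div_two_pow_sub_one_le {K : Set ℂ} (hK : IsBounded K) :
    ∃ C ≥ 0, ∀ a ∈ K, ∀ k : ℕ, ‖e (a / 2 ^ k) - 1‖ ≤ C * (1 / 2) ^ k := by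
  obtain ⟨R, hR, hKR⟩ := hK.exists_pos_norm_le
  refine ⟨2 * π * R * rexp (2 * π * R), by positivity, fun a ha k => ?_⟩
  have hnorm : ‖a / 2 ^ k‖ ≤ R * (1 / 2) ^ k := by
    rw [norm_div, norm_pow, Complex.norm_two, div_eq_mul_one_div, one_div_pow]
    gcongr
    exact hKR a ha
  have hnorm' : ‖a / 2 ^ k‖ ≤ R :=
    hnorm.trans (mul_le_of_le_one_right hR.le (pow_le_one₀ (by norm_num) (by norm_num)))
  calc ‖e (a / 2 ^ k) - 1‖ ≤ 2 * π * ‖a / 2 ^ k‖ * rexp (2 * π * ‖a / 2 ^ k‖) :=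
        norm_e_sub_one_le _
    _ ≤ 2 * π * (R * (1 / 2) ^ k) * rexp (2 * π * R) := by gcongr
    _ = 2 * π * R * rexp (2 * π * R) * (1 / 2) ^ k := by ring

lemma summable_e_div_two_pow_succ_sub_one (a : ℂ) :
    Summable fun l : ℕ => e (a / 2 ^ (l + 1)) - 1 := by
  obtain ⟨C, -, hC⟩ := (isBounded_singleton (x := a)).exists_norm_e_div_two_pow_sub_one_le
  refine .of_norm_bounded ((summable_nat_add_iff 1).mpr (summable_geometric_two.mul_left C))
    fun l => ?_
  exact hC a rfl (l + 1)

lemma Bornology.IsBounded.exists_norm_Δ_term_le {K : Set ℂ} (hK : IsBounded K) (m : ℤ) :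
    ∃ C, ∀ w ∈ K, ∀ s l : ℕ,
      ‖(e (w / 2 ^ (l + 1 + s)) - 1) * (e ((m : ℂ) / 2 ^ (l + 1)) - 1)‖
        ≤ C * (1 / 2) ^ s * (1 / 2) ^ l := by
  obtain ⟨A, hA, hAK⟩ := hK.exists_norm_e_div_two_pow_sub_one_le
  obtain ⟨B, hB, hBm⟩ := (isBounded_singleton (x := (m : ℂ))).exists_norm_e_div_two_pow_sub_one_le
  refine ⟨A * B, fun w hw s l => ?_⟩
  calc _ ≤ A * (1 / 2) ^ (l + 1 + s) * (B * (1 / 2) ^ (l + 1)) := by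
        rw [norm_mul]
        gcongr
        exacts [hAK w hw _, hBm _ rfl _]
    _ = A * B * (1 / 2) ^ s * (1 / 2) ^ l * ((1 / 2) ^ (l + 1) * (1 / 2)) := by ring
    _ ≤ A * B * (1 / 2) ^ s * (1 / 2) ^ l :=
        mul_le_of_le_one_right (by positivity)
          (mul_le_one₀ (pow_le_one₀ (by norm_num) (by norm_num)) (by norm_num) (by norm_num))

lemma summable_Δ_term (m : ℤ) (s : ℕ) (w : ℂ) :
    Summable fun l : ℕ => (e (w / 2 ^ (l + 1 + s)) - 1) * (e ((m : ℂ) / 2 ^ (l + 1)) - 1) := by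
  obtain ⟨C, hC⟩ := (isBounded_singleton (x := w)).exists_norm_Δ_term_le m
  exact .of_norm_bounded (summable_geometric_two.mul_left (C * (1 / 2) ^ s)) (hC w rfl s)

lemma F_add_intCast (u : ℂ) (k : ℤ) : F (u + k) = F u := by
  refine tsum_congr fun n => ?_
  have h : ((2 ^ n : ℕ) : ℂ) * (u + k) = (2 ^ n : ℕ) * u + ((2 ^ n * k : ℤ) : ℂ) := by
    push_cast
    ring
  rw [h, e_add_intCast]

lemma G_add_one (v : ℂ) : G (v + 1) = dyadicSum v - dyadicSum (-1) := by
  have hterm (l : ℕ) : e (-(1 / 2 ^ (l + 1))) * (e ((v + 1) / 2 ^ (l + 1)) - 1)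
      = (e (v / 2 ^ (l + 1)) - 1) - (e (-1 / 2 ^ (l + 1)) - 1) := by
    rw [mul_sub, ← e_add, neg_div]
    ring_nf
  rw [G, tsum_congr hterm, dyadicSum, dyadicSum, Summable.tsum_sub]
  all_goals exact summable_e_div_two_pow_succ_sub_one _

lemma S₁_eq (w : ℂ) : S₁ w = F (w + 1) + dyadicSum w - dyadicSum (-1) := by
  rw [S₁, S, G_add_one]
  ring

lemma dyadicSum_add_intCast_mul_two_pow (w : ℂ) (m : ℤ) (s : ℕ) :
    dyadicSum (w + m * 2 ^ s) = dyadicSum w + Δ m s w + c m := by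
  set d : ℕ → ℂ := fun l => (e ((w + m * 2 ^ s) / 2 ^ (l + 1)) - 1) - (e (w / 2 ^ (l + 1)) - 1)
  have hd : HasSum d (dyadicSum (w + m * 2 ^ s) - dyadicSum w) :=
    (summable_e_div_two_pow_succ_sub_one _).hasSum.sub
      (summable_e_div_two_pow_succ_sub_one _).hasSum
  have hd_low (l : ℕ) (hl : l < s) : d l = 0 := by
    obtain ⟨k, rfl⟩ := Nat.exists_eq_add_of_lt hl
    have hint : (m : ℂ) * 2 ^ (l + k + 1) / 2 ^ (l + 1) = ((m * 2 ^ k : ℤ) : ℂ) := by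
      rw [add_right_comm, pow_add]
      push_cast
      field_simp
    simp only [d, add_div, hint, e_add_intCast, sub_self]
  have hd_high (j : ℕ) : d (j + s)
      = (e (w / 2 ^ (j + 1 + s)) - 1) * (e ((m : ℂ) / 2 ^ (j + 1)) - 1)
        + (e ((m : ℂ) / 2 ^ (j + 1)) - 1) := by
    have hsplit : (w + m * 2 ^ s) / 2 ^ (j + 1 + s) = w / 2 ^ (j + 1 + s) + m / 2 ^ (j + 1) := by
      rw [pow_add _ (j + 1) s]
      field_simp
    simp only [d, add_right_comm j s 1, hsplit, e_add]
    ring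
  have hshift : HasSum (fun j => d (j + s)) (Δ m s w + c m) := by
    simp only [hd_high]
    exact (summable_Δ_term m s w).hasSum.add (summable_e_div_two_pow_succ_sub_one _).hasSum
  rw [hasSum_nat_add_iff, Finset.sum_eq_zero fun l hl => hd_low l (Finset.mem_range.mp hl),
    add_zero] at hshift
  linear_combination hd.unique hshift

lemma Bornology.IsBounded.exists_norm_Δ_le {K : Set ℂ} (hK : IsBounded K) (m : ℤ) :
    ∃ C : ℝ, ∀ w ∈ K, ∀ s : ℕ, ‖Δ m s w‖ ≤ C * 2 ^ (-(s : ℝ)) := by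
  obtain ⟨C, hC⟩ := hK.exists_norm_Δ_term_le m
  refine ⟨2 * C, fun w hw s => ?_⟩
  rw [rpow_neg zero_le_two, rpow_natCast, ← inv_pow, ← one_div]
  calc ‖Δ m s w‖ ≤ C * (1 / 2) ^ s * 2 :=
        tsum_of_norm_bounded (hasSum_geometric_two.mul_left _) (hC w hw s)
    _ = 2 * C * (1 / 2) ^ s := by ring

/-- `S₁(w + m·2^s) = S₁(w) + Δ_{m,s}(w) + c_m` on `ℍ`, and on every compact `K ⊂ ℍ`,
for each fixed `m`, `|Δ_{m,s}(w)| ≤ C·2^(−s)` uniformly. -/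
theorem S_one_translation_identity :
    (∀ w ∈ UHP, ∀ m : ℤ, ∀ s : ℕ,
      S₁ (w + (m : ℂ) * 2 ^ s) = S₁ w + Δ m s w + c m) ∧
    (∀ K : Set ℂ, IsCompact K → K ⊆ UHP → ∀ m : ℤ,
      ∃ C : ℝ, ∀ w ∈ K, ∀ s : ℕ, ‖Δ m s w‖ ≤ C * 2 ^ (-(s : ℝ))) := by
  refine ⟨fun w _ m s => ?_, fun K hK _ m => hK.isBounded.exists_norm_Δ_le m⟩
  have hF : F (w + m * 2 ^ s + 1) = F (w + 1) := by
    rw [add_right_comm]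
    exact_mod_cast F_add_intCast (w + 1) (m * 2 ^ s)
  rw [S₁_eq, S₁_eq, hF, dyadicSum_add_intCast_mul_two_pow]
  ring
end

section
/- For every integer m ≥ 1, the real number σ(m) is an integer linear combination of σ_1, …, σ_m: there exist integers a_1, …, a_m such that σ(m) = ∑_{j=1}^m a_j·σ_j. -/
/-- `σ_m = c_m + c_{−m}` (a real number). -/
noncomputable def σ (m : ℤ) : ℂ := c m + c (-m)

/-- `σ(m) = ∑_{l=1}^∞ (e(1/2^l) + e(−1/2^l) − 2)^m`. -/
noncomputable def σbig (m : ℕ) : ℂ :=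
  ∑' l : ℕ, (e (1 / 2 ^ (l + 1)) + e (-(1 / 2 ^ (l + 1))) - 2) ^ m

/-!
With `x = e(1/2^l)` and `y = e(-1/2^l) = x⁻¹` we have `x^m (x + y - 2)^m = (x - 1)^(2m)`. The
binomial coefficients `b_k = (-1)^k C(2m, k)` of `(x - 1)^(2m)` are symmetric and sum to zero, so
pairing `x^(m+j)` with `x^(m-j)` gives, termwise in `l`,
`(x + y - 2)^m = ∑_{j=1}^m (-1)^(m+j) C(2m, m+j) (x^j + y^j - 2)`.
Summing over `l` (every series converges absolutely, as `‖exp z - 1‖ ≤ 2‖z‖` for `‖z‖ ≤ 1`)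
turns this into `σ(m) = ∑_j (-1)^(m+j) C(2m, m+j) σ_j`.
-/

open Finset Filter

section Binomial

variable {R : Type*} [CommRing R]

theorem sub_one_pow_two_mul (x : R) (m : ℕ) :
    (x - 1) ^ (2 * m) = ∑ k ∈ range (2 * m + 1), (-1) ^ k * ((2 * m).choose k : R) * x ^ k := by
  rw [show (x - 1) ^ (2 * m) = (-x + 1) ^ (2 * m) by rw [pow_mul, pow_mul]; ring, add_pow]
  refine sum_congr rfl fun k _ => ?_
  rw [one_pow, mul_one, neg_pow]
  ring

theorem sum_range_two_mul_succ_of_symm (m : ℕ) (b u : ℕ → R)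
    (hb : ∀ k ≤ 2 * m, b (2 * m - k) = b k) :
    ∑ k ∈ range (2 * m + 1), b k * u k
      = b m * u m + ∑ j ∈ Icc 1 m, b (m + j) * (u (m + j) + u (m - j)) := by
  rw [show 2 * m + 1 = m + (m + 1) by ring, sum_range_add, sum_range_succ',
    ← sum_range_reflect (fun k => b k * u k) m, ← Ico_add_one_right_eq_Icc, sum_Ico_eq_sum_range,
    Nat.add_sub_cancel]
  have hreflect : ∀ i ∈ range m, b (m - 1 - i) * u (m - 1 - i) + b (m + (i + 1)) * u (m + (i + 1))
      = b (m + (1 + i)) * (u (m + (1 + i)) + u (m - (1 + i))) := by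
    intro i hi
    have him : i < m := mem_range.mp hi
    rw [← hb (m - 1 - i) (by omega), show 2 * m - (m - 1 - i) = m + (1 + i) by omega,
      show m - 1 - i = m - (1 + i) by omega, add_comm i 1]
    ring
  rw [← sum_congr rfl hreflect, sum_add_distrib, add_zero]
  ring

theorem pow_add_sub_two_eq_sum {x y : R} (hxy : x * y = 1) {m : ℕ} (hm : m ≠ 0) :
    (x + y - 2) ^ m
      = ∑ j ∈ Icc 1 m, (-1) ^ (m + j) * ((2 * m).choose (m + j) : R) * (x ^ j + y ^ j - 2) := by
  set b : ℕ → R := fun k => (-1) ^ k * ((2 * m).choose k : R)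
  have hb : ∀ k ≤ 2 * m, b (2 * m - k) = b k := by
    intro k hk
    simp only [b, Nat.choose_symm hk]
    rw [neg_one_pow_eq_pow_mod_two, neg_one_pow_eq_pow_mod_two (n := k),
      show (2 * m - k) % 2 = k % 2 by omega]
  have hsum : ∑ k ∈ range (2 * m + 1), b k = 0 := by
    simpa [zero_pow (by omega : 2 * m ≠ 0)] using (sub_one_pow_two_mul (1 : R) m).symm
  have hxm : ∀ j ≤ m, x ^ m * y ^ j = x ^ (m - j) := by
    intro j hj
    rw [← Nat.sub_add_cancel hj, pow_add, mul_assoc, ← mul_pow, hxy, one_pow, mul_one,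
      Nat.add_sub_cancel]
  refine ((IsUnit.of_mul_eq_one y hxy).pow m).mul_left_cancel ?_
  calc x ^ m * (x + y - 2) ^ m = (x - 1) ^ (2 * m) := by
        rw [← mul_pow, pow_mul]; congr 1; linear_combination hxy
    -- subtracting `(∑ k, b k) * x ^ m = 0` makes the middle term of the symmetric split vanish
    _ = ∑ k ∈ range (2 * m + 1), b k * (x ^ k - x ^ m) := by
        simp only [sub_one_pow_two_mul, mul_sub, sum_sub_distrib, ← sum_mul, hsum, zero_mul,
          sub_zero, b]
    _ = ∑ j ∈ Icc 1 m, b (m + j) * ((x ^ (m + j) - x ^ m) + (x ^ (m - j) - x ^ m)) := by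
        rw [sum_range_two_mul_succ_of_symm m b _ hb, sub_self, mul_zero, zero_add]
    _ = _ := by
        rw [mul_sum]
        refine sum_congr rfl fun j hj => ?_
        rw [← hxm j (mem_Icc.mp hj).2, pow_add]
        ring

end Binomial

theorem summable_cexp_sub_one {ι : Type*} {f : ι → ℂ} (hf : Summable fun i => ‖f i‖) :
    Summable fun i => Complex.exp (f i) - 1 := by
  refine (hf.mul_left 2).of_norm_bounded_eventually ?_
  filter_upwards [hf.tendsto_cofinite_zero.eventually (eventually_le_nhds one_pos)] with i hi
  exact Complex.norm_exp_sub_one_le hi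

theorem e_mul_e_neg (w : ℂ) : e w * e (-w) = 1 := by
  rw [e, e, ← Complex.exp_add, ← Complex.exp_zero]
  ring_nf

theorem e_pow (w : ℂ) (j : ℕ) : e w ^ j = e (j * w) := by
  rw [e, e, ← Complex.exp_nat_mul]
  ring_nf

theorem summable_e_div_two_pow_sub_one (w : ℂ) :
    Summable fun l : ℕ => e (w / 2 ^ (l + 1)) - 1 := by
  refine summable_cexp_sub_one ?_
  have : Summable fun l : ℕ => ‖2 * Real.pi * Complex.I * w‖ / 2 * (1 / 2) ^ l :=
    summable_geometric_two.mul_left _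
  convert this using 2 with l
  simp [norm_pow]
  ring

/-- For every `m ≥ 1`, `σ(m)` is an integer linear combination of `σ_1, …, σ_m`. -/
theorem σbig_integer_combination (m : ℕ) (hm : 1 ≤ m) :
    ∃ a : ℕ → ℤ, σbig m = ∑ j ∈ Finset.Icc 1 m, (a j : ℂ) * σ (j : ℤ) := by
  refine ⟨fun j => (-1) ^ (m + j) * (2 * m).choose (m + j), ?_⟩
  have hterm : ∀ l : ℕ, (e (1 / 2 ^ (l + 1)) + e (-(1 / 2 ^ (l + 1))) - 2) ^ m
      = ∑ j ∈ Icc 1 m, ((-1) ^ (m + j) * (2 * m).choose (m + j) : ℤ)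
          * ((e (((j : ℤ) : ℂ) / 2 ^ (l + 1)) - 1) + (e (((-j : ℤ) : ℂ) / 2 ^ (l + 1)) - 1)) := by
    intro l
    rw [pow_add_sub_two_eq_sum (e_mul_e_neg _) (by omega)]
    refine sum_congr rfl fun j _ => ?_
    rw [e_pow, e_pow]
    push_cast
    ring_nf
  rw [σbig, tsum_congr hterm, Summable.tsum_finsetSum fun j _ =>
    ((summable_e_div_two_pow_sub_one _).add (summable_e_div_two_pow_sub_one _)).mul_left _]
  refine sum_congr rfl fun j _ => ?_
  rw [tsum_mul_left, σ, c, c, Summable.tsum_add (summable_e_div_two_pow_sub_one _)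
    (summable_e_div_two_pow_sub_one _)]
end
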